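/- Assume n ≥ 2, M_{{1}} ≤ M_{{2}}, min_{x∈Δ_m} u^L(x,2) < M_{{1}}, and M_{{1}} > M_{[n]}. If M_{{1,2}} = M_{[n]}, then there exists x* ∈ Δ_m such that u^L(x*,1) = u^L(x*,2) = M_{{1,2}} = M_{[n]} (so J = {1,2} and x* satisfy u^L(x*,j) = M_J = M_{[n]} for all j ∈ J). -/

import Mathlib

open scoped Classical
open Finset

noncomputable section

/-- The leader's mixed-strategy simplex Δ_m. -/
def simplex (m : ℕ) : Set (Fin m → ℝ) := stdSimplex ℝ (Fin m)

/-- Linear extension of a payoff matrix to mixed strategies: u(x,j) = ∑ i, x i * u i j. -/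
def pay {m n : ℕ} (u : Fin m → Fin n → ℝ) (x : Fin m → ℝ) (j : Fin n) : ℝ :=
  ∑ i, x i * u i j

/-- Inner product on ℝ^m. -/
def dot {m : ℕ} (a x : Fin m → ℝ) : ℝ := ∑ i, a i * x i

/-- min_{j ∈ S} u(x, j). -/
def minOnSet {m n : ℕ} (u : Fin m → Fin n → ℝ) (S : Set (Fin n)) (x : Fin m → ℝ) : ℝ :=
  sInf ((fun j => pay u x j) '' S)

/-- The leader's maximin value M_S = max_{x∈Δ_m} min_{j∈S} u(x,j). -/
def Mval {m n : ℕ} (u : Fin m → Fin n → ℝ) (S : Set (Fin n)) : ℝ :=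
  sSup (minOnSet u S '' simplex m)

/-- The set 𝓜_S of maximin strategies. -/
def argMM {m n : ℕ} (u : Fin m → Fin n → ℝ) (S : Set (Fin n)) : Set (Fin m → ℝ) :=
  {x ∈ simplex m | minOnSet u S x = Mval u S}

/-- The follower's best-response set BR(x) = argmax_j uF(x,j). -/
def BR {m n : ℕ} (uF : Fin m → Fin n → ℝ) (x : Fin m → ℝ) : Set (Fin n) :=
  {j | ∀ j', pay uF x j' ≤ pay uF x j}

/-- Strong Stackelberg equilibrium of the game (uL, uF). -/
def SSE {m n : ℕ} (uL uF : Fin m → Fin n → ℝ) (x : Fin m → ℝ) (j : Fin n) : Prop :=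
  x ∈ simplex m ∧ j ∈ BR uF x ∧
    ∀ x' ∈ simplex m, ∀ j' ∈ BR uF x', pay uL x' j' ≤ pay uL x j

/-- (x, j) is inducible with respect to the leader payoff uL. -/
def Inducible {m n : ℕ} (uL : Fin m → Fin n → ℝ) (x : Fin m → ℝ) (j : Fin n) : Prop :=
  ∃ uF : Fin m → Fin n → ℝ, SSE uL uF x j

/-- μ is a (maximin-)cover of S w.r.t. uL: max_{x∈𝓜_S} max_{j∈BR(x)} uL(x,j) < M_S. -/
def IsCover {m n : ℕ} (uL μ : Fin m → Fin n → ℝ) (S : Set (Fin n)) : Prop :=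
  ∀ x ∈ argMM uL S, ∀ j ∈ BR μ x, pay uL x j < Mval uL S

/-- μ is a proper cover of S w.r.t. uL. -/
def IsProperCover {m n : ℕ} (uL μ : Fin m → Fin n → ℝ) (S : Set (Fin n)) : Prop :=
  IsCover uL μ S ∧ ∀ x ∈ simplex m, ∀ j ∈ S, j ∉ BR μ x

/-!
Let `M = M_{{1,2}}` be attained at `x̄`, say with `u(x̄,1) = M ≤ u(x̄,2)`. Since
`M = M_{[n]} < M_{{1}} ≤ M_{{2}}`, some `y` has `u(y,1) > M`, and then `u(y,2) ≤ M` because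
`min (u(y,1), u(y,2)) ≤ M`. The gap `u(·,1) - u(·,2)` is affine and changes sign on `[x̄, y]`,
so it vanishes at some `x*` there; on that segment `u(·,1) ≥ M`, while
`u(x*,1) = min (u(x*,1), u(x*,2)) ≤ M`.
-/

section Affine

variable {E : Type*} [AddCommGroup E] [Module ℝ E] {s : Set E}

theorem Convex.exists_eq_eq_of_min_le (hs : Convex ℝ s) (f g : E →ᵃ[ℝ] ℝ) {M : ℝ}
    (hle : ∀ x ∈ s, min (f x) (g x) ≤ M) {a b : E} (ha : a ∈ s) (hfa : f a = M)
    (hga : M ≤ g a) (hb : b ∈ s) (hfb : M < f b) :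
    ∃ x ∈ s, f x = M ∧ g x = M := by
  have hgb : g b ≤ M := by
    rcases min_le_iff.mp (hle b hb) with h | h
    · linarith
    · exact h
  have hzero : (0 : ℝ) ∈ segment ℝ (f a - g a) (f b - g b) := by
    rw [segment_eq_Icc (by linarith)]
    constructor <;> linarith
  obtain ⟨p, q, hp, hq, hpq, hpq0⟩ := hzero
  have hx : p • a + q • b ∈ s := hs ha hb hp hq hpq
  have hfx : f (p • a + q • b) = p * f a + q * f b := Convex.combo_affine_apply hpq
  have hgx : g (p • a + q • b) = p * g a + q * g b := Convex.combo_affine_apply hpq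
  have hfg : f (p • a + q • b) = g (p • a + q • b) := by
    simp only [smul_eq_mul] at hpq0
    linarith
  have hfx_le : f (p • a + q • b) ≤ M := by simpa [hfg] using hle _ hx
  have hfx_ge : M ≤ f (p • a + q • b) := by
    calc M = p * M + q * M := by rw [← add_mul, hpq, one_mul]
      _ ≤ f (p • a + q • b) := by rw [hfx, hfa]; gcongr
  exact ⟨_, hx, le_antisymm hfx_le hfx_ge, hfg ▸ le_antisymm hfx_le hfx_ge⟩

theorem Convex.exists_eq_eq_of_isMaxOn_min (hs : Convex ℝ s) (f g : E →ᵃ[ℝ] ℝ) {a b c : E}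
    (ha : a ∈ s) (hmax : IsMaxOn (fun x => min (f x) (g x)) s a)
    (hb : b ∈ s) (hfb : min (f a) (g a) < f b) (hc : c ∈ s) (hgc : min (f a) (g a) < g c) :
    ∃ x ∈ s, f x = min (f a) (g a) ∧ g x = min (f a) (g a) := by
  rcases le_total (f a) (g a) with h | h
  · rw [min_eq_left h] at hfb ⊢
    exact hs.exists_eq_eq_of_min_le f g (fun x hx => min_eq_left h ▸ hmax hx) ha rfl h hb hfb
  · rw [min_eq_right h] at hgc ⊢
    obtain ⟨x, hx, hgx, hfx⟩ := hs.exists_eq_eq_of_min_le g f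
      (fun x hx => min_comm (f x) (g x) ▸ min_eq_right h ▸ hmax hx) ha rfl h hc hgc
    exact ⟨x, hx, hfx, hgx⟩

end Affine

section Maximin

variable {m n : ℕ}

def payAffine (u : Fin m → Fin n → ℝ) (j : Fin n) : (Fin m → ℝ) →ᵃ[ℝ] ℝ :=
  ((LinearMap.proj j).comp (Matrix.vecMulLinear u)).toAffineMap

theorem continuous_pay (u : Fin m → Fin n → ℝ) (j : Fin n) :
    Continuous fun x : Fin m → ℝ => pay u x j :=
  continuous_finsetSum _ fun i _ => (continuous_apply i).mul continuous_const

theorem simplex_nonempty (hm : 0 < m) : (simplex m).Nonempty :=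
  ⟨_, ite_eq_mem_stdSimplex ℝ (⟨0, hm⟩ : Fin m)⟩

theorem minOnSet_singleton (u : Fin m → Fin n → ℝ) (j : Fin n) :
    minOnSet u {j} = fun x => pay u x j := by
  ext x
  rw [minOnSet, Set.image_singleton, csInf_singleton]

theorem minOnSet_pair (u : Fin m → Fin n → ℝ) (j₁ j₂ : Fin n) :
    minOnSet u {j₁, j₂} = fun x => min (pay u x j₁) (pay u x j₂) := by
  ext x
  rw [minOnSet, Set.image_pair, csInf_pair]

theorem argMM_nonempty (hm : 0 < m) {u : Fin m → Fin n → ℝ} {S : Set (Fin n)}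
    (hS : Continuous (minOnSet u S)) : (argMM u S).Nonempty := by
  have hK := (isCompact_stdSimplex ℝ (Fin m)).image hS
  obtain ⟨x, hx, hxM⟩ := hK.sSup_mem ((simplex_nonempty hm).image _)
  exact ⟨x, hx, hxM⟩

theorem isMaxOn_of_mem_argMM {u : Fin m → Fin n → ℝ} {S : Set (Fin n)}
    (hS : Continuous (minOnSet u S)) {x : Fin m → ℝ} (hx : x ∈ argMM u S) :
    IsMaxOn (minOnSet u S) (simplex m) x := fun y hy => by
  show minOnSet u S y ≤ minOnSet u S x
  rw [hx.2]
  exact le_csSup ((isCompact_stdSimplex ℝ (Fin m)).image hS).bddAbove ⟨y, hy, rfl⟩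

theorem exists_lt_pay_of_lt_Mval_singleton (hm : 0 < m) {u : Fin m → Fin n → ℝ} {j : Fin n}
    {c : ℝ} (hc : c < Mval u {j}) : ∃ x ∈ simplex m, c < pay u x j := by
  rw [Mval, minOnSet_singleton] at hc
  obtain ⟨_, ⟨x, hx, rfl⟩, hcx⟩ := exists_lt_of_lt_csSup ((simplex_nonempty hm).image _) hc
  exact ⟨x, hx, hcx⟩

end Maximin

theorem J_xstar_when_no_cover_general {m n : ℕ} (hm : 0 < m)
    (uL : Fin m → Fin n → ℝ) (j1 j2 : Fin n)
    (hM : Mval uL {j1} ≤ Mval uL {j2})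
    (hM1 : Mval uL Set.univ < Mval uL {j1})
    (h12 : Mval uL {j1, j2} = Mval uL Set.univ) :
    ∃ xstar ∈ simplex m,
      pay uL xstar j1 = Mval uL {j1, j2} ∧ pay uL xstar j2 = Mval uL {j1, j2} := by
  have hcont : Continuous (minOnSet uL {j1, j2}) := by
    rw [minOnSet_pair]
    exact (continuous_pay uL j1).min (continuous_pay uL j2)
  obtain ⟨xb, hxb⟩ := argMM_nonempty hm hcont
  have hmax := isMaxOn_of_mem_argMM hcont hxb
  obtain ⟨hxb_mem, hxb_val⟩ := hxb
  rw [minOnSet_pair] at hmax hxb_val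
  have hlt1 : Mval uL {j1, j2} < Mval uL {j1} := h12 ▸ hM1
  obtain ⟨x1, hx1, hx1_lt⟩ := exists_lt_pay_of_lt_Mval_singleton hm hlt1
  obtain ⟨x2, hx2, hx2_lt⟩ := exists_lt_pay_of_lt_Mval_singleton hm (hlt1.trans_le hM)
  rw [← hxb_val] at hx1_lt hx2_lt ⊢
  exact (convex_stdSimplex ℝ (Fin m)).exists_eq_eq_of_isMaxOn_min (payAffine uL j1)
    (payAffine uL j2) hxb_mem hmax hx1 hx1_lt hx2 hx2_lt

/-- if M_{1,2} = M_{[n]} (i.e., {1,2} admits no cover), then there is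
x* ∈ Δ_m with u^L(x*,1) = u^L(x*,2) = M_{1,2} = M_{[n]}, so J = {1,2} together with x*
satisfies u^L(x*,j) = M_J = M_{[n]} for all j ∈ J. (Actions 1, 2 are j1, j2.) -/
theorem J_xstar_when_no_cover {m n : ℕ} (hm : 0 < m)
    (uL : Fin m → Fin n → ℝ) (j1 j2 : Fin n) (hj : j1 ≠ j2)
    (hM : Mval uL {j1} ≤ Mval uL {j2})
    (hmin : sInf ((fun x => pay uL x j2) '' simplex m) < Mval uL {j1})
    (hM1 : Mval uL Set.univ < Mval uL {j1})
    (h12 : Mval uL {j1, j2} = Mval uL Set.univ) :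
    ∃ xstar ∈ simplex m,
      pay uL xstar j1 = Mval uL {j1, j2} ∧ pay uL xstar j2 = Mval uL {j1, j2} :=
  J_xstar_when_no_cover_general hm uL j1 j2 hM hM1 h12
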